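/- Let C ≥ 1, d ≥ 1, K ≥ 1. Suppose there are N real graphs, the i-th having adjacency matrix A_(i) ∈ ℝ^{m_i×m_i}, feature matrix X_(i) ∈ ℝ^{m_i×d} and label y_i ∈ {0,…,C−1}, and N' ≥ 1 synthetic graphs, the i-th having adjacency matrix A'_(i) ∈ ℝ^{n_i×n_i} with n_i ≥ 1 nodes, feature matrix X'_(i) ∈ ℝ^{n_i×d} and label y'_i. With the K-layer mean-pooling SGC classifier f_W(A,X) = (1/n)·1ᵀA^K X W ∈ ℝ^C for a graph on n nodes, define ℓ_T(W) = Σ_{i=1}^{N} ℓ(f_W(A_(i),X_(i)), y_i) and ℓ_S(W) = (1/N') Σ_{i=1}^{N'} ℓ(f_W(A'_(i),X'_(i)), y'_i), where ℓ is the softmax cross-entropy loss. Let L = ((C−1)/(C·N'))·√(Σ_{i=1}^{N'} (1/n_i)·‖1ᵀ(A'_(i))^K X'_(i)‖²) and assume L > 0. Fix M > 0, an integer T ≥ 1, set η = M/(√T·L), and let W_{t+1} = W_t − η·∇ℓ_S(W_t) for 0 ≤ t ≤ T−2 starting from W_0 ∈ ℝ^{d×C}. Let W* ∈ ℝ^{d×C}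 and assume (i) ‖W_t − W*‖ ≤ √2·M for all 0 ≤ t ≤ T−1, and (ii) ‖∇ℓ_S(W)‖ ≤ L for all W. Then min_{0≤t≤T−1} (ℓ_T(W_t) − ℓ_T(W*)) ≤ (√2·M/T)·Σ_{t=0}^{T−1} ‖∇ℓ_T(W_t) − ∇ℓ_S(W_t)‖ + (3M/(2√T))·((C−1)/(C·N'))·√(Σ_{i=1}^{N'} (1/n_i)·‖1ᵀ(A'_(i))^K X'_(i)‖²). -/

import Mathlib

open scoped BigOperators

/-- The softmax cross-entropy loss of a logit vector `z : ℝ^C` with label `y`. -/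
noncomputable def crossEntropy {C : ℕ} (z : Fin C → ℝ) (y : Fin C) : ℝ :=
  Real.log (∑ c, Real.exp (z c)) - z y

/-- The logits of the `K`-layer mean-pooling SGC classifier `(1/n)·1ᵀ A^K X W ∈ ℝ^C`. -/
noncomputable def sgcMeanLogits {n d C : ℕ} (K : ℕ)
    (A : Matrix (Fin n) (Fin n) ℝ) (X : Matrix (Fin n) (Fin d) ℝ)
    (W : EuclideanSpace ℝ (Fin d × Fin C)) : Fin C → ℝ :=
  fun c => ∑ j, ((1 / (n : ℝ)) * ∑ u, ∑ u', (A ^ K) u u' * X u' j) * W (j, c)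

/-!
The target loss `ℓ_T` is convex and differentiable in `W`: each summand is log-sum-exp, which is
convex by weighted AM–GM, composed with the linear map `W ↦ f_W(A, X)`, minus a linear term.
Hence `ℓ_T(W_t) - ℓ_T(W*) ≤ ⟪∇ℓ_T(W_t), W_t - W*⟫`. Splitting `∇ℓ_T = (∇ℓ_T - ∇ℓ_S) + ∇ℓ_S`,
the first part costs at most `√2 M ‖∇ℓ_T(W_t) - ∇ℓ_S(W_t)‖` by Cauchy–Schwarz, and the second
is the regret of gradient descent on `ℓ_S`, which telescopes to at most
`(‖W_0 - W*‖² + η² T L²) / (2η) = 3M² / (2η)`. Finally the minimum over `t` is at most the average.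
-/

open Set Real RealInnerProductSpace

theorem convexOn_finset_sum {𝕜 E β ι : Type*} [Semiring 𝕜] [PartialOrder 𝕜] [AddCommMonoid E]
    [AddCommMonoid β] [PartialOrder β] [IsOrderedAddMonoid β] [SMul 𝕜 E] [Module 𝕜 β]
    {s : Set E} (hs : Convex 𝕜 s) (t : Finset ι) {f : ι → E → β}
    (hf : ∀ i ∈ t, ConvexOn 𝕜 s (f i)) :
    ConvexOn 𝕜 s (fun x => ∑ i ∈ t, f i x) := by
  classical
  induction t using Finset.induction_on with
  | empty => simpa using convexOn_const 0 hs
  | insert i t hi ih =>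
    simp only [Finset.sum_insert hi]
    exact (hf i (Finset.mem_insert_self i t)).add
      (ih fun j hj => hf j (Finset.mem_insert_of_mem hj))

theorem sum_exp_pos {ι : Type*} [Fintype ι] [Nonempty ι] (z : ι → ℝ) : 0 < ∑ i, exp (z i) :=
  Finset.sum_pos (fun _ _ => exp_pos _) Finset.univ_nonempty

theorem convexOn_log_sum_exp {ι : Type*} [Fintype ι] [Nonempty ι] :
    ConvexOn ℝ univ (fun z : ι → ℝ => log (∑ i, exp (z i))) := by
  refine ⟨convex_univ, fun z _ w _ a b ha hb hab => ?_⟩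
  set P := ∑ i, exp (z i)
  set Q := ∑ i, exp (w i)
  set c := a * log P + b * log Q
  rw [smul_eq_mul, smul_eq_mul, log_le_iff_le_exp (sum_exp_pos _)]
  have hnorm (v : ι → ℝ) : ∑ i, exp (v i - log (∑ i, exp (v i))) = 1 := by
    simp_rw [exp_sub, exp_log (sum_exp_pos v), ← Finset.sum_div, div_self (sum_exp_pos v).ne']
  -- weighted AM–GM on the entries of the normalized vectors `exp (z - log P)`, `exp (w - log Q)`
  calc ∑ i, exp ((a • z + b • w) i)
      = ∑ i, exp (z i - log P) ^ a * exp (w i - log Q) ^ b * exp c := by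
        refine Finset.sum_congr rfl fun i _ => ?_
        rw [← exp_mul, ← exp_mul, ← exp_add, ← exp_add]
        simp only [c, Pi.add_apply, Pi.smul_apply, smul_eq_mul]
        ring_nf
    _ ≤ ∑ i, (a * exp (z i - log P) + b * exp (w i - log Q)) * exp c := by
        gcongr with i
        exact geom_mean_le_arith_mean2_weighted ha hb (exp_pos _).le (exp_pos _).le hab
    _ = exp c := by
        rw [← Finset.sum_mul, Finset.sum_add_distrib, ← Finset.mul_sum, ← Finset.mul_sum,
          hnorm, hnorm, mul_one, mul_one, hab, one_mul]

theorem convexOn_crossEntropy {C : ℕ} (y : Fin C) : ConvexOn ℝ univ (crossEntropy · y) :=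
  have : Nonempty (Fin C) := ⟨y⟩
  convexOn_log_sum_exp.sub ((LinearMap.proj y : (Fin C → ℝ) →ₗ[ℝ] ℝ).concaveOn convex_univ)

theorem differentiable_crossEntropy {C : ℕ} (y : Fin C) :
    Differentiable ℝ (crossEntropy · y) := by
  have : Nonempty (Fin C) := ⟨y⟩
  unfold crossEntropy
  fun_prop (disch := exact fun z => (sum_exp_pos z).ne')

noncomputable def sgcMeanLogitsLinearMap {n d C : ℕ} (K : ℕ) (A : Matrix (Fin n) (Fin n) ℝ)
    (X : Matrix (Fin n) (Fin d) ℝ) : EuclideanSpace ℝ (Fin d × Fin C) →ₗ[ℝ] (Fin C → ℝ) where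
  toFun := sgcMeanLogits K A X
  map_add' V V' := by
    ext c
    simp [sgcMeanLogits, mul_add, Finset.sum_add_distrib]
  map_smul' r V := by
    ext c
    simp [sgcMeanLogits, Finset.mul_sum, mul_left_comm r]

section
variable {n d C : ℕ} (K : ℕ) (A : Matrix (Fin n) (Fin n) ℝ) (X : Matrix (Fin n) (Fin d) ℝ)
  (y : Fin C)

theorem convexOn_crossEntropy_sgcMeanLogits :
    ConvexOn ℝ univ (fun W => crossEntropy (sgcMeanLogits K A X W) y) :=
  (convexOn_crossEntropy y).comp_linearMap (sgcMeanLogitsLinearMap K A X)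

theorem differentiable_crossEntropy_sgcMeanLogits :
    Differentiable ℝ (fun W => crossEntropy (sgcMeanLogits K A X W) y) :=
  (differentiable_crossEntropy y).comp
    (LinearMap.toContinuousLinearMap (sgcMeanLogitsLinearMap K A X)).differentiable

end

theorem ConvexOn.le_sub_of_hasFDerivAt {E : Type*} [NormedAddCommGroup E] [NormedSpace ℝ E]
    {f : E → ℝ} {f' : E →L[ℝ] ℝ} {x : E} (hf : ConvexOn ℝ univ f) (hf' : HasFDerivAt f f' x)
    (y : E) : f' (y - x) ≤ f y - f x := by
  have hline : HasDerivAt (f ∘ AffineMap.lineMap x y) (f' (y - x)) (0 : ℝ) :=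
    hf'.comp_hasDerivAt_of_eq 0 AffineMap.hasDerivAt_lineMap (by simp)
  have hconv : ConvexOn ℝ univ (f ∘ AffineMap.lineMap x y) := hf.comp_affineMap _
  simpa [slope_def_field] using
    hconv.le_slope_of_hasDerivAt (mem_univ 0) (mem_univ 1) zero_lt_one hline

variable {F : Type*} [NormedAddCommGroup F] [InnerProductSpace ℝ F]

theorem ConvexOn.sub_le_inner_gradient [CompleteSpace F] {f : F → ℝ} {x : F}
    (hf : ConvexOn ℝ univ f) (hfx : DifferentiableAt ℝ f x) (y : F) :
    f x - f y ≤ ⟪gradient f x, x - y⟫ := by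
  have := hf.le_sub_of_hasFDerivAt hfx.hasGradientAt.hasFDerivAt y
  rw [InnerProductSpace.toDual_apply_apply, inner_sub_right] at this
  rw [inner_sub_right]
  linarith

theorem two_mul_mul_inner_sub_eq (g w w' : F) (η : ℝ) :
    2 * η * ⟪g, w - w'⟫ = ‖w - w'‖ ^ 2 - ‖w - η • g - w'‖ ^ 2 + η ^ 2 * ‖g‖ ^ 2 := by
  rw [sub_right_comm w, norm_sub_sq_real (w - w'), inner_smul_right, real_inner_comm, norm_smul,
    Real.norm_eq_abs, mul_pow, sq_abs]
  ring

open Finset in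
theorem sum_inner_le_of_gradient_steps {g W : ℕ → F} {w : F} {η : ℝ} {T : ℕ}
    (hstep : ∀ t, t + 2 ≤ T → W (t + 1) = W t - η • g t) :
    2 * η * ∑ t ∈ range T, ⟪g t, W t - w⟫ ≤ ‖W 0 - w‖ ^ 2 + η ^ 2 * ∑ t ∈ range T, ‖g t‖ ^ 2 := by
  simp_rw [mul_sum, two_mul_mul_inner_sub_eq, sum_add_distrib]
  gcongr
  cases T with
  | zero => simp
  | succ S =>
    have htelescope : ∀ t ∈ range S, ‖W t - w‖ ^ 2 - ‖W t - η • g t - w‖ ^ 2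
        = ‖W t - w‖ ^ 2 - ‖W (t + 1) - w‖ ^ 2 := fun t ht => by
      rw [hstep t (by simp at ht; omega)]
    rw [sum_range_succ, sum_congr rfl htelescope, sum_range_sub']
    nlinarith [sq_nonneg ‖W S - η • g S - w‖]

open Finset in
theorem ConvexOn.exists_sub_le_of_gradient_steps [CompleteSpace F] {f : F → ℝ}
    (hf : ConvexOn ℝ Set.univ f) (hfd : Differentiable ℝ f) {g W : ℕ → F} {w : F} {η B G : ℝ}
    {T : ℕ} (hT : 0 < T) (hη : 0 < η) (hstep : ∀ t, t + 2 ≤ T → W (t + 1) = W t - η • g t)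
    (hB : ∀ t < T, ‖W t - w‖ ≤ B) (hG : ∀ t < T, ‖g t‖ ≤ G) :
    ∃ t < T, f (W t) - f w ≤ B / T * ∑ t ∈ range T, ‖gradient f (W t) - g t‖ +
      (B ^ 2 + η ^ 2 * T * G ^ 2) / (2 * η * T) := by
  have hstep_bound (t : ℕ) (ht : t < T) :
      f (W t) - f w ≤ B * ‖gradient f (W t) - g t‖ + ⟪g t, W t - w⟫ :=
    calc f (W t) - f w ≤ ⟪gradient f (W t), W t - w⟫ := hf.sub_le_inner_gradient (hfd _) w
      _ = ⟪gradient f (W t) - g t, W t - w⟫ + ⟪g t, W t - w⟫ := by rw [inner_sub_left]; ring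
      _ ≤ ‖gradient f (W t) - g t‖ * B + ⟪g t, W t - w⟫ := by
        gcongr
        exact (real_inner_le_norm _ _).trans (by gcongr; exact hB t ht)
      _ = B * ‖gradient f (W t) - g t‖ + ⟪g t, W t - w⟫ := by ring
  have hregret : 2 * η * ∑ t ∈ range T, ⟪g t, W t - w⟫ ≤ B ^ 2 + η ^ 2 * T * G ^ 2 := by
    have hW0 : ‖W 0 - w‖ ^ 2 ≤ B ^ 2 := by gcongr; exact hB 0 hT
    have hgsq : ∑ t ∈ range T, ‖g t‖ ^ 2 ≤ T * G ^ 2 := by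
      simpa using sum_le_card_nsmul (range T) _ _ fun t ht =>
        pow_le_pow_left₀ (norm_nonneg _) (hG t (mem_range.mp ht)) 2
    nlinarith [sum_inner_le_of_gradient_steps (w := w) hstep]
  set D := ∑ t ∈ range T, ‖gradient f (W t) - g t‖
  have hT' : (0 : ℝ) < T := Nat.cast_pos.mpr hT
  have hsum : ∑ t ∈ range T, (f (W t) - f w) ≤
      ∑ _t ∈ range T, (B / T * D + (B ^ 2 + η ^ 2 * T * G ^ 2) / (2 * η * T)) :=
    calc ∑ t ∈ range T, (f (W t) - f w)
        ≤ ∑ t ∈ range T, (B * ‖gradient f (W t) - g t‖ + ⟪g t, W t - w⟫) :=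
          sum_le_sum fun t ht => hstep_bound t (mem_range.mp ht)
      _ = B * D + ∑ t ∈ range T, ⟪g t, W t - w⟫ := by rw [sum_add_distrib, mul_sum]
      _ ≤ B * D + (B ^ 2 + η ^ 2 * T * G ^ 2) / (2 * η) := by
          gcongr
          rw [le_div_iff₀ (by positivity)]
          linarith
      _ = ∑ _t ∈ range T, (B / T * D + (B ^ 2 + η ^ 2 * T * G ^ 2) / (2 * η * T)) := by
          rw [sum_const, card_range, nsmul_eq_mul]
          field_simp
  obtain ⟨t, ht, hle⟩ := exists_le_of_sum_le (nonempty_range_iff.mpr hT.ne') hsum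
  exact ⟨t, mem_range.mp ht, hle⟩

theorem one_step_gradient_matching_mean_pooling_general
    (C d K N N' : ℕ)
    (m : Fin N → ℕ)
    (A : ∀ i : Fin N, Matrix (Fin (m i)) (Fin (m i)) ℝ)
    (X : ∀ i : Fin N, Matrix (Fin (m i)) (Fin d) ℝ)
    (y : Fin N → Fin C)
    (n : Fin N' → ℕ)
    (A' : ∀ i : Fin N', Matrix (Fin (n i)) (Fin (n i)) ℝ)
    (X' : ∀ i : Fin N', Matrix (Fin (n i)) (Fin d) ℝ)
    (lossT lossS : EuclideanSpace ℝ (Fin d × Fin C) → ℝ)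
    (hlossT : lossT = fun W => ∑ i, crossEntropy (sgcMeanLogits K (A i) (X i) W) (y i))
    (L : ℝ)
    (hL : L = (((C : ℝ) - 1) / ((C : ℝ) * (N' : ℝ))) *
      Real.sqrt (∑ i, (1 / (n i : ℝ)) *
        ∑ j, (∑ u, ∑ u', ((A' i) ^ K) u u' * X' i u' j) ^ 2))
    (hLpos : 0 < L)
    (M : ℝ) (hM : 0 < M) (T : ℕ) (hT : 1 ≤ T)
    (η : ℝ) (hη : η = M / (Real.sqrt T * L))
    (W : ℕ → EuclideanSpace ℝ (Fin d × Fin C))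
    (hstep : ∀ t, t + 2 ≤ T → W (t + 1) = W t - η • gradient lossS (W t))
    (Wstar : EuclideanSpace ℝ (Fin d × Fin C))
    (hbdd : ∀ t < T, ‖W t - Wstar‖ ≤ Real.sqrt 2 * M)
    (hgrad : ∀ V : EuclideanSpace ℝ (Fin d × Fin C), ‖gradient lossS V‖ ≤ L) :
    ∃ t < T, lossT (W t) - lossT Wstar ≤
      (Real.sqrt 2 * M / T) *
          ∑ t ∈ Finset.range T, ‖gradient lossT (W t) - gradient lossS (W t)‖ +
        (3 * M / (2 * Real.sqrt T)) * (((C : ℝ) - 1) / ((C : ℝ) * (N' : ℝ))) *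
          Real.sqrt (∑ i, (1 / (n i : ℝ)) *
            ∑ j, (∑ u, ∑ u', ((A' i) ^ K) u u' * X' i u' j) ^ 2) := by
  subst hlossT
  have hconv := convexOn_finset_sum convex_univ Finset.univ fun i _ =>
    convexOn_crossEntropy_sgcMeanLogits K (A i) (X i) (y i)
  have hdiff := Differentiable.fun_sum fun i (_ : i ∈ Finset.univ) =>
    differentiable_crossEntropy_sgcMeanLogits K (A i) (X i) (y i)
  have hηpos : 0 < η := by rw [hη]; positivity
  obtain ⟨t, ht, hle⟩ := hconv.exists_sub_le_of_gradient_steps hdiff hT hηpos hstep hbdd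
    fun t _ => hgrad (W t)
  refine ⟨t, ht, hle.trans_eq ?_⟩
  rw [mul_assoc _ (((C : ℝ) - 1) / _), ← hL, hη, mul_pow, sq_sqrt zero_le_two]
  field_simp
  rw [sq_sqrt (Nat.cast_nonneg T)]
  ring

/-- Theorem 1 of the paper (mean-pooling case, `γ_i = 1/n_i`): one-step gradient matching
bound for graph classification with a `K`-layer mean-pooling SGC classifier. -/
theorem one_step_gradient_matching_mean_pooling
    (C d K N N' : ℕ) (hC : 1 ≤ C) (hd : 1 ≤ d) (hK : 1 ≤ K) (hN' : 1 ≤ N')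
    (m : Fin N → ℕ)
    (A : ∀ i : Fin N, Matrix (Fin (m i)) (Fin (m i)) ℝ)
    (X : ∀ i : Fin N, Matrix (Fin (m i)) (Fin d) ℝ)
    (y : Fin N → Fin C)
    (n : Fin N' → ℕ) (hn : ∀ i, 1 ≤ n i)
    (A' : ∀ i : Fin N', Matrix (Fin (n i)) (Fin (n i)) ℝ)
    (X' : ∀ i : Fin N', Matrix (Fin (n i)) (Fin d) ℝ)
    (y' : Fin N' → Fin C)
    (lossT lossS : EuclideanSpace ℝ (Fin d × Fin C) → ℝ)
    (hlossT : lossT = fun W => ∑ i, crossEntropy (sgcMeanLogits K (A i) (X i) W) (y i))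
    (hlossS : lossS = fun W =>
      (1 / (N' : ℝ)) * ∑ i, crossEntropy (sgcMeanLogits K (A' i) (X' i) W) (y' i))
    (L : ℝ)
    (hL : L = (((C : ℝ) - 1) / ((C : ℝ) * (N' : ℝ))) *
      Real.sqrt (∑ i, (1 / (n i : ℝ)) *
        ∑ j, (∑ u, ∑ u', ((A' i) ^ K) u u' * X' i u' j) ^ 2))
    (hLpos : 0 < L)
    (M : ℝ) (hM : 0 < M) (T : ℕ) (hT : 1 ≤ T)
    (η : ℝ) (hη : η = M / (Real.sqrt T * L))
    (W : ℕ → EuclideanSpace ℝ (Fin d × Fin C))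
    (hstep : ∀ t, t + 2 ≤ T → W (t + 1) = W t - η • gradient lossS (W t))
    (Wstar : EuclideanSpace ℝ (Fin d × Fin C))
    (hbdd : ∀ t < T, ‖W t - Wstar‖ ≤ Real.sqrt 2 * M)
    (hgrad : ∀ V : EuclideanSpace ℝ (Fin d × Fin C), ‖gradient lossS V‖ ≤ L) :
    ∃ t < T, lossT (W t) - lossT Wstar ≤
      (Real.sqrt 2 * M / T) *
          ∑ t ∈ Finset.range T, ‖gradient lossT (W t) - gradient lossS (W t)‖ +
        (3 * M / (2 * Real.sqrt T)) * (((C : ℝ) - 1) / ((C : ℝ) * (N' : ℝ))) *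
          Real.sqrt (∑ i, (1 / (n i : ℝ)) *
            ∑ j, (∑ u, ∑ u', ((A' i) ^ K) u u' * X' i u' j) ^ 2) :=
  one_step_gradient_matching_mean_pooling_general C d K N N' m A X y n A' X' lossT lossS hlossT L hL
    hLpos M hM T hT η hη W hstep Wstar hbdd hgrad
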